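/- Let q ∈ ℂ with q ∉ {0, 1, −1}, and set C11 = 1 + e34 and C22 = diag(q², q, 1, 1) in M₄(ℂ). Then the set of matrices commuting with both C11 and C22 equals the linear span of {e11, e22, e33 + e44, e34}, which is 4-dimensional. -/

import Mathlib

open Matrix

noncomputable def E (i j : Fin 4) : Matrix (Fin 4) (Fin 4) ℂ :=
  Matrix.single i j 1

/-- The centralizer of a matrix, as a submodule of M₄(ℂ). -/
noncomputable def cent (D : Matrix (Fin 4) (Fin 4) ℂ) : Submodule ℂ (Matrix (Fin 4) (Fin 4) ℂ) where
  carrier := {X | X * D = D * X}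
  add_mem' := by
    intro a b ha hb
    simp only [Set.mem_setOf_eq] at *
    rw [add_mul, mul_add, ha, hb]
  zero_mem' := by simp
  smul_mem' := by
    intro c a ha
    simp only [Set.mem_setOf_eq] at *
    rw [smul_mul_assoc, mul_smul_comm, ha]

/-- The joint centralizer of two matrices, as a submodule of M₄(ℂ). -/
noncomputable def cent2 (A B : Matrix (Fin 4) (Fin 4) ℂ) : Submodule ℂ (Matrix (Fin 4) (Fin 4) ℂ) where
  carrier := {X | X * A = A * X ∧ X * B = B * X}
  add_mem' := by
    rintro a b ⟨ha1, ha2⟩ ⟨hb1, hb2⟩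
    constructor <;> rw [add_mul, mul_add]
    · rw [ha1, hb1]
    · rw [ha2, hb2]
  zero_mem' := by simp
  smul_mem' := by
    rintro c a ⟨ha1, ha2⟩
    constructor <;> rw [smul_mul_assoc, mul_smul_comm]
    · rw [ha1]
    · rw [ha2]

/-!
Since `q²`, `q`, `1` are pairwise distinct, a matrix commuting with `C22` has no entries linking
the index blocks `{0}`, `{1}`, `{2, 3}`. Commuting with `C11 = 1 + E 2 3` amounts to commuting with
the nilpotent `E 2 3`, which forces the `{2, 3}` block to be of the form `a + b E 2 3`. Conversely
the four generators commute with both matrices, and they are visibly linearly independent.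
-/

theorem commute_one_add_right_iff {R : Type*} [Ring R] {a b : R} :
    Commute a (1 + b) ↔ Commute a b :=
  ⟨fun h => by simpa using h.sub_right (Commute.one_right a),
    fun h => (Commute.one_right a).add_right h⟩

namespace Matrix

variable {n R : Type*} [Fintype n] [DecidableEq n] [CommRing R] [IsDomain R]

theorem commute_diagonal_iff {X : Matrix n n R} {d : n → R} :
    Commute X (diagonal d) ↔ ∀ i j, d i ≠ d j → X i j = 0 := by
  rw [commute_iff_eq, ← Matrix.ext_iff]
  refine forall₂_congr fun i j => ?_
  rw [mul_diagonal, diagonal_mul, mul_comm, mul_eq_mul_right_iff, eq_comm, or_iff_not_imp_left]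

theorem commute_single_diagonal {i j : n} {d : n → R} (c : R) (h : d i = d j) :
    Commute (single i j c) (diagonal d) :=
  commute_diagonal_iff.mpr fun a b hab => by
    rw [single_apply, if_neg]
    rintro ⟨rfl, rfl⟩
    exact hab h

end Matrix

noncomputable def invariantGens : Fin 4 → Matrix (Fin 4) (Fin 4) ℂ :=
  ![E 0 0, E 1 1, E 2 2 + E 3 3, E 2 3]

theorem range_invariantGens :
    Set.range invariantGens = {E 0 0, E 1 1, E 2 2 + E 3 3, E 2 3} := by
  simp only [invariantGens, range_cons, range_empty, Set.union_empty, Set.singleton_union]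

theorem linearIndependent_invariantGens : LinearIndependent ℂ invariantGens := by
  refine Fintype.linearIndependent_iff.mpr fun g hg k => ?_
  have entry (i j : Fin 4) := congrFun (congrFun hg i) j
  fin_cases k
  · simpa [Fin.sum_univ_four, invariantGens, E] using entry 0 0
  · simpa [Fin.sum_univ_four, invariantGens, E] using entry 1 1
  · simpa [Fin.sum_univ_four, invariantGens, E] using entry 2 2
  · simpa [Fin.sum_univ_four, invariantGens, E] using entry 2 3

theorem invariantGens_commute_one_add (k : Fin 4) : Commute (invariantGens k) (1 + E 2 3) := by
  rw [commute_one_add_right_iff]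
  fin_cases k <;> simp [invariantGens, E, commute_iff_eq, add_mul, mul_add]

theorem invariantGens_commute_diagonal (q : ℂ) (k : Fin 4) :
    Commute (invariantGens k) (diagonal ![q ^ 2, q, 1, 1]) := by
  fin_cases k
  · exact commute_single_diagonal _ rfl
  · exact commute_single_diagonal _ rfl
  · exact (commute_single_diagonal _ rfl).add_left (commute_single_diagonal _ rfl)
  · exact commute_single_diagonal _ rfl

theorem eq_sum_invariantGens_of_commute {q : ℂ} (h01 : q ^ 2 ≠ q) (h02 : q ^ 2 ≠ 1) (h12 : q ≠ 1)
    {X : Matrix (Fin 4) (Fin 4) ℂ} (hN : Commute (E 2 3) X)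
    (hD : Commute X (diagonal ![q ^ 2, q, 1, 1])) :
    X = ∑ k, ![X 0 0, X 1 1, X 2 2, X 2 3] k • invariantGens k := by
  have hblock := commute_diagonal_iff.mp hD
  have hrow (k : Fin 4) (hk : k ≠ 3) : X 3 k = 0 := row_eq_zero_of_commute_single hN hk
  have hcol (k : Fin 4) (hk : k ≠ 2) : X k 2 = 0 := col_eq_zero_of_commute_single hN hk
  have hdiag : X 2 2 = X 3 3 := diag_eq_of_commute_single hN
  ext i j
  fin_cases i <;> fin_cases j <;>
    simp only [Fin.zero_eta, Fin.mk_one, Fin.reduceFinMk, Fin.isValue, Fin.reduceEq,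
      Fin.sum_univ_four, invariantGens, E, cons_val, smul_add, smul_single, smul_eq_mul, mul_one,
      Matrix.add_apply, single_apply, and_true, and_false, and_self, reduceIte, add_zero,
      zero_add] <;>
    first
    | exact hdiag.symm
    | exact hrow _ (by decide)
    | exact hcol _ (by decide)
    | exact hblock _ _ (by
        simp only [cons_val]
        first | assumption | exact Ne.symm (by assumption))

theorem cent2_eq_span_invariantGens {q : ℂ} (h01 : q ^ 2 ≠ q) (h02 : q ^ 2 ≠ 1) (h12 : q ≠ 1) :
    cent2 (1 + E 2 3) (diagonal ![q ^ 2, q, 1, 1]) = Submodule.span ℂ (Set.range invariantGens) := by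
  refine le_antisymm (fun X hX => ?_) (Submodule.span_le.mpr ?_)
  · obtain ⟨hN, hD⟩ := hX
    exact (Submodule.mem_span_range_iff_exists_fun ℂ).mpr ⟨_,
      (eq_sum_invariantGens_of_commute h01 h02 h12 (commute_one_add_right_iff.mp hN).symm hD).symm⟩
  · rintro _ ⟨k, rfl⟩
    exact ⟨invariantGens_commute_one_add k, invariantGens_commute_diagonal q k⟩

theorem case717_invariants (q : ℂ) (hq0 : q ≠ 0) (hq1 : q ≠ 1) (hqm1 : q ≠ -1)
    (C11 C22 : Matrix (Fin 4) (Fin 4) ℂ)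
    (h11 : C11 = 1 + E 2 3)
    (h22 : C22 = Matrix.diagonal ![q ^ 2, q, 1, 1]) :
    (cent2 C11 C22 : Set (Matrix (Fin 4) (Fin 4) ℂ)) =
      (Submodule.span ℂ {E 0 0, E 1 1, E 2 2 + E 3 3, E 2 3} :
        Submodule ℂ (Matrix (Fin 4) (Fin 4) ℂ)) ∧
      Module.finrank ℂ (cent2 C11 C22) = 4 := by
  subst h11 h22
  have hsq : q ^ 2 ≠ q := by rwa [sq, Ne, mul_eq_left₀ hq0]
  have hspan := cent2_eq_span_invariantGens hsq (sq_ne_one_iff.mpr ⟨hq1, hqm1⟩) hq1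
  refine ⟨by rw [hspan, range_invariantGens], ?_⟩
  rw [hspan, finrank_span_eq_card linearIndependent_invariantGens, Fintype.card_fin]
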